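/- For all complex numbers z, z' with |z| ≤ 1, |z'| ≤ 1, and z ≠ 0, defining F(w) = w ln|w|² (with F(0)=0), we have |F(z) − F(z')| ≤ |z − z'|·(6 − ln|z|²). -/

import Mathlib

/-!
Since `Real.log 0 = 0`, `F w = w · L w` with `L w = ln ‖w‖²` holds for every `w`. If `‖a‖ ≤ ‖b‖ ≤ 1`,
split `F b - F a = (b - a) L b + a (L b - L a)`: the first term is at most `‖b - a‖ (-L b)`, and
`‖a‖ |L b - L a| = 2 ‖a‖ ln (‖b‖/‖a‖) ≤ 2 (‖b‖ - ‖a‖)` by `ln x ≤ x - 1`. Hence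
`‖F b - F a‖ ≤ ‖b - a‖ (2 - L b)`. When `‖z‖ ≤ ‖z'‖` this is applied with `b = z'`, and
`-L z' ≤ -L z` needs `z ≠ 0`, as `L 0 = 0`.
-/

/-- The nonlinearity `F(w) = w ln|w|²`, extended by `0` at `w = 0`. -/
noncomputable def logNL (w : ℂ) : ℂ :=
  if w = 0 then 0 else w * Real.log (‖w‖ ^ 2)

open Real

theorem Real.mul_abs_log_sq_sub_log_sq_le {a b : ℝ} (ha : 0 ≤ a) (hab : a ≤ b) :
    a * |log (b ^ 2) - log (a ^ 2)| ≤ 2 * (b - a) := by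
  rcases ha.eq_or_lt with rfl | ha
  · simpa using hab
  have hb : 0 < b := ha.trans_le hab
  have hlog : log (b ^ 2) - log (a ^ 2) = 2 * log (b / a) := by
    rw [log_div hb.ne' ha.ne', log_pow, log_pow]
    push_cast
    ring
  rw [hlog, abs_of_nonneg (mul_nonneg zero_le_two (log_nonneg ((one_le_div ha).2 hab)))]
  calc a * (2 * log (b / a)) ≤ a * (2 * (b / a - 1)) := by
        gcongr
        exact log_le_sub_one_of_pos (div_pos hb ha)
    _ = 2 * (b - a) := by field_simp

theorem logNL_eq_mul_log (w : ℂ) : logNL w = w * (log (‖w‖ ^ 2) : ℂ) := by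
  unfold logNL
  split_ifs with h <;> simp [h]

theorem norm_logNL_sub_le_of_norm_le {a b : ℂ} (hab : ‖a‖ ≤ ‖b‖) (hb : ‖b‖ ≤ 1) :
    ‖logNL b - logNL a‖ ≤ ‖b - a‖ * (2 - log (‖b‖ ^ 2)) := by
  set Lb := log (‖b‖ ^ 2)
  set La := log (‖a‖ ^ 2)
  have hLb : Lb ≤ 0 := log_nonpos (sq_nonneg _) (pow_le_one₀ (norm_nonneg _) hb)
  have hsplit : logNL b - logNL a = (b - a) * (Lb : ℂ) + a * ((Lb - La : ℝ) : ℂ) := by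
    rw [logNL_eq_mul_log, logNL_eq_mul_log]
    push_cast
    ring
  calc ‖logNL b - logNL a‖ ≤ ‖b - a‖ * |Lb| + ‖a‖ * |Lb - La| := by
        rw [hsplit]
        refine (norm_add_le _ _).trans_eq ?_
        simp only [norm_mul, Complex.norm_real, Real.norm_eq_abs]
    _ ≤ ‖b - a‖ * (-Lb) + 2 * (‖b‖ - ‖a‖) := by
        rw [abs_of_nonpos hLb]
        gcongr ‖b - a‖ * (-Lb) + ?_
        exact mul_abs_log_sq_sub_log_sq_le (norm_nonneg a) hab
    _ ≤ ‖b - a‖ * (2 - Lb) := by nlinarith [norm_sub_norm_le b a]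

theorem norm_logNL_sub_le {z z' : ℂ} (hz : ‖z‖ ≤ 1) (hz' : ‖z'‖ ≤ 1) (hz0 : z ≠ 0) :
    ‖logNL z - logNL z'‖ ≤ ‖z - z'‖ * (2 - log (‖z‖ ^ 2)) := by
  rcases le_total ‖z'‖ ‖z‖ with h | h
  · exact norm_logNL_sub_le_of_norm_le h hz
  have hmono : log (‖z‖ ^ 2) ≤ log (‖z'‖ ^ 2) :=
    log_le_log (by positivity) (by gcongr)
  calc ‖logNL z - logNL z'‖ = ‖logNL z' - logNL z‖ := norm_sub_rev _ _
    _ ≤ ‖z' - z‖ * (2 - log (‖z'‖ ^ 2)) := norm_logNL_sub_le_of_norm_le h hz'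
    _ ≤ ‖z - z'‖ * (2 - log (‖z‖ ^ 2)) := by
        rw [norm_sub_rev]
        gcongr

/-- For `|z| ≤ 1`, `|z'| ≤ 1`, `z ≠ 0`, one has
`|F(z) − F(z')| ≤ |z − z'| (6 − ln|z|²)`. -/
theorem logNL_asymmetric_estimate (z z' : ℂ) (hz : ‖z‖ ≤ 1)
    (hz' : ‖z'‖ ≤ 1) (hz0 : z ≠ 0) :
    ‖logNL z - logNL z'‖ ≤
      ‖z - z'‖ * (6 - Real.log (‖z‖ ^ 2)) :=
  (norm_logNL_sub_le hz hz' hz0).trans (by gcongr; norm_num)
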